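/- For a, b ∈ ℤ set ν_{a,b} := 𝓜_a ∘ 𝓜_b − q·𝓜_{a+1} ∘ 𝓜_{b−1} (a quantum determinant). Then for all a, b ∈ ℤ the operator 𝓜_{a,b} satisfies the quadratic polynomial relation (q − 1)(q² − t²)(1 − t²) · 𝓜_{a,b} = q(q + t²)·ν_{a,b} − t(1 + q)·ν_{a+1,b−1} + (q + t²)·ν_{b−1,a+1} − q·t(1 + q)·ν_{b−2,a+2}. In particular, every operator 𝓜_{a,b} is an explicit quadratic polynomial in the operators 𝓜ₙ. -/

import Mathlib

open scoped BigOperators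

noncomputable section

/-- The field `F(x₁,…,x_N)` of rational functions in `N` variables over `F`. -/
abbrev RatF (F : Type) [Field F] (N : ℕ) : Type :=
  FractionRing (MvPolynomial (Fin N) F)

/-- The variable `xᵢ` viewed inside the rational function field. -/
noncomputable def Xv (F : Type) [Field F] (N : ℕ) (i : Fin N) : RatF F N :=
  algebraMap (MvPolynomial (Fin N) F) (RatF F N) (MvPolynomial.X i)

/-- The generalized Macdonald operator `𝓜ₙ`:
`𝓜ₙ f = Σᵢ xᵢⁿ · (Πⱼ≠ᵢ (t·xᵢ − xⱼ)/(xᵢ − xⱼ)) · Γᵢ(f)`. -/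
noncomputable def Mac (F : Type) [Field F] (N : ℕ) (t : F)
    (Γ : Fin N → (RatF F N ≃ₐ[F] RatF F N)) (n : ℤ) (f : RatF F N) : RatF F N :=
  ∑ i : Fin N, Xv F N i ^ n *
    (∏ j ∈ Finset.univ.erase i, (t • Xv F N i - Xv F N j) / (Xv F N i - Xv F N j)) *
    Γ i f

/-- The operator `𝓜_{a,b}` built from the generalized Schur function
`s_{a,b}(x,y) = (x^{a+1}y^b − y^{a+1}x^b)/(x−y)`:
`𝓜_{a,b} f = Σ_{i<j} s_{a,b}(xᵢ,xⱼ) · Π_{k∉{i,j}} ((t xᵢ−xₖ)(t xⱼ−xₖ))/((xᵢ−xₖ)(xⱼ−xₖ)) · ΓᵢΓⱼ f`. -/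
noncomputable def MacPair (F : Type) [Field F] (N : ℕ) (t : F)
    (Γ : Fin N → (RatF F N ≃ₐ[F] RatF F N)) (a b : ℤ) (f : RatF F N) : RatF F N :=
  ∑ i : Fin N, ∑ j ∈ Finset.univ.filter (fun j : Fin N => i < j),
    ((Xv F N i ^ (a + 1) * Xv F N j ^ b - Xv F N j ^ (a + 1) * Xv F N i ^ b) /
        (Xv F N i - Xv F N j)) *
      (∏ k ∈ (Finset.univ.erase i).erase j,
        ((t • Xv F N i - Xv F N k) * (t • Xv F N j - Xv F N k)) /
          ((Xv F N i - Xv F N k) * (Xv F N j - Xv F N k))) *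
      Γ i (Γ j f)

/-- The quantum determinant `ν_{a,b} = 𝓜_a𝓜_b − q·𝓜_{a+1}𝓜_{b−1}`. -/
noncomputable def nuOp (F : Type) [Field F] (N : ℕ) (q t : F)
    (Γ : Fin N → (RatF F N ≃ₐ[F] RatF F N)) (a b : ℤ) (f : RatF F N) : RatF F N :=
  Mac F N t Γ a (Mac F N t Γ b f) - q • Mac F N t Γ (a + 1) (Mac F N t Γ (b - 1) f)

/-!
With `Aᵢ = ∏_{j ≠ i} (t xᵢ − xⱼ)/(xᵢ − xⱼ)`, the `(i, j)` summand of `𝓜ₙ𝓜ₘ − q 𝓜ₙ₊₁𝓜ₘ₋₁` carries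
the factor `Γᵢ(xⱼ) − q xᵢ`. Hence the diagonal terms cancel and
`ν_{n,m} = Σ_{i ≠ j} xᵢⁿ xⱼ^{m−1} (t xᵢ − xⱼ)(t xⱼ − q xᵢ)/(xᵢ − xⱼ) · Pᵢⱼ · ΓᵢΓⱼ`,
where `Pᵢⱼ = Pⱼᵢ` is the product occurring in `𝓜_{a,b}`. As the `Γᵢ` commute, grouping `(i, j)`
with `(j, i)` reduces the theorem to an identity between rational functions of `xᵢ, xⱼ`.
-/

section NuCoef

variable {K : Type*} [Field K]

def nuCoef (q t : K) (n m : ℤ) (x y : K) : K :=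
  x ^ n * y ^ (m - 1) * (t * x - y) * (t * y - q * x) / (x - y)

theorem schur_eq_nuCoef_combination (q t : K) (a b : ℤ) {x y : K} (hx : x ≠ 0) (hy : y ≠ 0)
    (hxy : x ≠ y) :
    (q - 1) * (q ^ 2 - t ^ 2) * (1 - t ^ 2) * ((x ^ (a + 1) * y ^ b - y ^ (a + 1) * x ^ b) / (x - y))
      = q * (q + t ^ 2) * (nuCoef q t a b x y + nuCoef q t a b y x)
        - t * (1 + q) * (nuCoef q t (a + 1) (b - 1) x y + nuCoef q t (a + 1) (b - 1) y x)
        + (q + t ^ 2) * (nuCoef q t (b - 1) (a + 1) x y + nuCoef q t (b - 1) (a + 1) y x)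
        - q * t * (1 + q) * (nuCoef q t (b - 2) (a + 2) x y + nuCoef q t (b - 2) (a + 2) y x) := by
  have hxy' : x - y ≠ 0 := sub_ne_zero.mpr hxy
  have hyx' : y - x ≠ 0 := sub_ne_zero.mpr hxy.symm
  simp only [nuCoef, add_sub_cancel_right, zpow_add₀ hx, zpow_add₀ hy, zpow_sub₀ hx, zpow_sub₀ hy,
    zpow_ofNat]
  field_simp
  ring

theorem nu_summand_eq_mul_sub {F : Type*} [Field F] [Algebra F K] (g : K ≃ₐ[F] K) (q : F)
    {u v : K} (hu : u ≠ 0) (hv : v ≠ 0) (n m : ℤ) (α β w : K) :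
    u ^ n * α * g (v ^ m * β * w) - q • (u ^ (n + 1) * α * g (v ^ (m - 1) * β * w))
      = u ^ n * α * g (v ^ (m - 1) * β * w) * (g v - q • u) := by
  obtain ⟨k, rfl⟩ : ∃ k, m = k + 1 := ⟨m - 1, by ring⟩
  rw [add_sub_cancel_right, zpow_add_one₀ hu, zpow_add_one₀ hv]
  simp only [map_mul, Algebra.smul_def]
  ring

end NuCoef

theorem Finset.sum_sum_erase_eq_sum_sum_lt {ι M : Type*} [Fintype ι] [LinearOrder ι]
    [AddCommMonoid M] (g : ι → ι → M) :
    ∑ i, ∑ j ∈ univ.erase i, g i j = ∑ i, ∑ j ∈ univ.filter (fun j => i < j), (g i j + g j i) := by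
  have hswap : ∑ i, ∑ j ∈ univ.filter (fun j => i < j), g j i
      = ∑ i, ∑ j ∈ univ.filter (fun j => j < i), g i j :=
    Finset.sum_comm' (by simp)
  have hsplit (i : ι) : ∑ j ∈ univ.erase i, g i j
      = ∑ j ∈ univ.filter (fun j => i < j), g i j + ∑ j ∈ univ.filter (fun j => j < i), g i j := by
    rw [← Finset.sum_union (Finset.disjoint_filter.2 fun j _ h h' => lt_asymm h h')]
    congr 1
    ext j
    simp [ne_comm, lt_or_lt_iff_ne]
  simp only [Finset.sum_add_distrib, hswap, hsplit]

section RatF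

variable {F : Type} [Field F] {N : ℕ}

theorem Xv_ne_smul_Xv (c : F) {i j : Fin N} (h : i ≠ j) : Xv F N i ≠ c • Xv F N j := by
  rw [Xv, Xv, Algebra.smul_def, IsScalarTower.algebraMap_apply F (MvPolynomial (Fin N) F),
    ← map_mul, MvPolynomial.algebraMap_eq, (IsFractionRing.injective _ _).ne_iff]
  intro hX
  simpa [MvPolynomial.coeff_X, Finsupp.single_left_inj one_ne_zero, h, Ne.symm h] using
    congrArg (MvPolynomial.coeff (Finsupp.single i 1)) hX

theorem Xv_ne_zero (i : Fin N) : Xv F N i ≠ 0 := by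
  simp [Xv, MvPolynomial.X_ne_zero]

theorem Xv_ne_Xv {i j : Fin N} (h : i ≠ j) : Xv F N i ≠ Xv F N j := by
  simpa using Xv_ne_smul_Xv (1 : F) h

def IsShift (q : F) (Γ : Fin N → (RatF F N ≃ₐ[F] RatF F N)) : Prop :=
  ∀ i j : Fin N, Γ i (Xv F N j) = if j = i then q • Xv F N j else Xv F N j

-- `macCoef t i` is `Aᵢ`, and `macCoefErase t i j * macCoefErase t j i` is `Pᵢⱼ`.
def macCoef (t : F) (i : Fin N) : RatF F N :=
  ∏ j ∈ Finset.univ.erase i, (t • Xv F N i - Xv F N j) / (Xv F N i - Xv F N j)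

def macCoefErase (t : F) (i j : Fin N) : RatF F N :=
  ∏ k ∈ (Finset.univ.erase i).erase j, (t • Xv F N i - Xv F N k) / (Xv F N i - Xv F N k)

theorem macCoef_eq_mul_macCoefErase (t : F) {i j : Fin N} (h : j ≠ i) :
    macCoef t i = (t • Xv F N i - Xv F N j) / (Xv F N i - Xv F N j) * macCoefErase t i j :=
  (Finset.mul_prod_erase _ _ (Finset.mem_erase.2 ⟨h, Finset.mem_univ j⟩)).symm

theorem MacPair_eq_sum_lt (t : F) (Γ : Fin N → (RatF F N ≃ₐ[F] RatF F N)) (a b : ℤ)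
    (f : RatF F N) :
    MacPair F N t Γ a b f
      = ∑ i, ∑ j ∈ Finset.univ.filter (fun j => i < j),
          (Xv F N i ^ (a + 1) * Xv F N j ^ b - Xv F N j ^ (a + 1) * Xv F N i ^ b)
              / (Xv F N i - Xv F N j)
            * (macCoefErase t i j * macCoefErase t j i) * Γ i (Γ j f) := by
  refine Finset.sum_congr rfl fun i _ => Finset.sum_congr rfl fun j _ => ?_
  rw [macCoefErase, macCoefErase, Finset.erase_right_comm, ← Finset.prod_mul_distrib]
  simp only [div_mul_div_comm]

namespace IsShift

variable {q : F} {Γ : Fin N → (RatF F N ≃ₐ[F] RatF F N)}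

theorem apply_self (hΓ : IsShift q Γ) (i : Fin N) : Γ i (Xv F N i) = q • Xv F N i := by
  simpa using hΓ i i

theorem apply_of_ne (hΓ : IsShift q Γ) {i j : Fin N} (h : j ≠ i) : Γ i (Xv F N j) = Xv F N j := by
  simpa [h] using hΓ i j

theorem comm (hΓ : IsShift q Γ) (i j : Fin N) (z : RatF F N) : Γ i (Γ j z) = Γ j (Γ i z) := by
  suffices (Γ i).toAlgHom.comp (Γ j).toAlgHom = (Γ j).toAlgHom.comp (Γ i).toAlgHom from
    DFunLike.congr_fun this z
  refine IsLocalization.algHom_ext (nonZeroDivisors (MvPolynomial (Fin N) F)) ?_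
  refine MvPolynomial.algHom_ext fun k => ?_
  change Γ i (Γ j (Xv F N k)) = Γ j (Γ i (Xv F N k))
  obtain rfl | hki := eq_or_ne k i <;> obtain rfl | hkj := eq_or_ne k j <;>
    simp [hΓ.apply_self, hΓ.apply_of_ne, *]

theorem map_macCoef (hΓ : IsShift q Γ) (t : F) {i j : Fin N} (h : j ≠ i) :
    Γ i (macCoef t j)
      = (t • Xv F N j - q • Xv F N i) / (Xv F N j - q • Xv F N i) * macCoefErase t j i := by
  rw [macCoef_eq_mul_macCoefErase t h.symm, macCoefErase, map_mul, map_prod, map_div₀, map_sub,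
    map_sub, map_smul, hΓ.apply_self, hΓ.apply_of_ne h]
  congr 1
  refine Finset.prod_congr rfl fun k hk => ?_
  rw [map_div₀, map_sub, map_sub, map_smul, hΓ.apply_of_ne h,
    hΓ.apply_of_ne (Finset.ne_of_mem_erase hk)]

theorem nu_summand_of_ne (hΓ : IsShift q Γ) (t : F) {i j : Fin N} (h : j ≠ i) (n m : ℤ)
    (g : RatF F N) :
    Xv F N i ^ n * macCoef t i * Γ i (Xv F N j ^ (m - 1) * macCoef t j * g)
        * (Γ i (Xv F N j) - q • Xv F N i)
      = nuCoef (algebraMap F _ q) (algebraMap F _ t) n m (Xv F N i) (Xv F N j)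
          * (macCoefErase t i j * macCoefErase t j i) * Γ i g := by
  have hji : Xv F N j - q • Xv F N i ≠ 0 := sub_ne_zero.2 (Xv_ne_smul_Xv q h)
  rw [map_mul, map_mul, map_zpow₀, hΓ.apply_of_ne h, hΓ.map_macCoef t h,
    macCoef_eq_mul_macCoefErase t h, nuCoef]
  simp only [Algebra.smul_def] at hji ⊢
  set x := Xv F N i
  set y := Xv F N j
  linear_combination x ^ n * y ^ (m - 1) * (algebraMap F _ t * x - y) / (x - y)
    * macCoefErase t i j * macCoefErase t j i * Γ i g
    * div_mul_cancel₀ (algebraMap F _ t * y - algebraMap F _ q * x) hji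

theorem nuOp_eq_sum_erase (hΓ : IsShift q Γ) (t : F) (n m : ℤ) (f : RatF F N) :
    nuOp F N q t Γ n m f
      = ∑ i, ∑ j ∈ Finset.univ.erase i,
          nuCoef (algebraMap F _ q) (algebraMap F _ t) n m (Xv F N i) (Xv F N j)
            * (macCoefErase t i j * macCoefErase t j i) * Γ i (Γ j f) := by
  have hMac (k : ℤ) (g : RatF F N) :
      Mac F N t Γ k g = ∑ i, Xv F N i ^ k * macCoef t i * Γ i g := rfl
  simp only [nuOp, hMac, map_sum, Finset.mul_sum, Finset.smul_sum, ← Finset.sum_sub_distrib]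
  refine Finset.sum_congr rfl fun i _ => ?_
  simp only [nu_summand_eq_mul_sub (Γ i) q (Xv_ne_zero i) (Xv_ne_zero _)]
  rw [← Finset.add_sum_erase _ _ (Finset.mem_univ i), hΓ.apply_self, sub_self, mul_zero, zero_add]
  exact Finset.sum_congr rfl fun j hj => hΓ.nu_summand_of_ne t (Finset.ne_of_mem_erase hj) n m _

theorem nuOp_eq_sum_lt (hΓ : IsShift q Γ) (t : F) (n m : ℤ) (f : RatF F N) :
    nuOp F N q t Γ n m f
      = ∑ i, ∑ j ∈ Finset.univ.filter (fun j => i < j),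
          (nuCoef (algebraMap F _ q) (algebraMap F _ t) n m (Xv F N i) (Xv F N j)
            + nuCoef (algebraMap F _ q) (algebraMap F _ t) n m (Xv F N j) (Xv F N i))
            * (macCoefErase t i j * macCoefErase t j i) * Γ i (Γ j f) := by
  rw [hΓ.nuOp_eq_sum_erase, Finset.sum_sum_erase_eq_sum_sum_lt]
  refine Finset.sum_congr rfl fun i _ => Finset.sum_congr rfl fun j _ => ?_
  rw [hΓ.comm j i, mul_comm (macCoefErase t j i)]
  ring

end IsShift

end RatF

theorem statement9_general (F : Type) [Field F] (q t : F)
    (N : ℕ)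
    (Γ : Fin N → (RatF F N ≃ₐ[F] RatF F N))
    (hΓ : ∀ i j : Fin N, Γ i (Xv F N j) = if j = i then q • Xv F N j else Xv F N j)
    (a b : ℤ) (f : RatF F N) :
    ((q - 1) * (q ^ 2 - t ^ 2) * (1 - t ^ 2)) • MacPair F N t Γ a b f
      = (q * (q + t ^ 2)) • nuOp F N q t Γ a b f
        - (t * (1 + q)) • nuOp F N q t Γ (a + 1) (b - 1) f
        + (q + t ^ 2) • nuOp F N q t Γ (b - 1) (a + 1) f
        - (q * t * (1 + q)) • nuOp F N q t Γ (b - 2) (a + 2) f := by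
  have hShift : IsShift q Γ := hΓ
  simp only [MacPair_eq_sum_lt, hShift.nuOp_eq_sum_lt, Finset.smul_sum, ← Finset.sum_sub_distrib,
    ← Finset.sum_add_distrib]
  refine Finset.sum_congr rfl fun i _ => Finset.sum_congr rfl fun j hj => ?_
  have key := schur_eq_nuCoef_combination (algebraMap F (RatF F N) q) (algebraMap F _ t) a b
    (Xv_ne_zero i) (Xv_ne_zero j) (Xv_ne_Xv (Finset.mem_filter.1 hj).2.ne)
  simp only [Algebra.smul_def, map_mul, map_sub, map_add, map_pow, map_one]
  linear_combination (macCoefErase t i j * macCoefErase t j i * Γ i (Γ j f)) * key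

/-- the quadratic polynomial expression for `𝓜_{a,b}`:
`(q−1)(q²−t²)(1−t²)·𝓜_{a,b} = q(q+t²)ν_{a,b} − t(1+q)ν_{a+1,b−1} + (q+t²)ν_{b−1,a+1}
− qt(1+q)ν_{b−2,a+2}`. -/
theorem statement9 (F : Type) [Field F] [CharZero F] (q t : F) (hq : q ≠ 0) (ht : t ≠ 0)
    (N : ℕ) (hN : 1 ≤ N)
    (Γ : Fin N → (RatF F N ≃ₐ[F] RatF F N))
    (hΓ : ∀ i j : Fin N, Γ i (Xv F N j) = if j = i then q • Xv F N j else Xv F N j)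
    (a b : ℤ) (f : RatF F N) :
    ((q - 1) * (q ^ 2 - t ^ 2) * (1 - t ^ 2)) • MacPair F N t Γ a b f
      = (q * (q + t ^ 2)) • nuOp F N q t Γ a b f
        - (t * (1 + q)) • nuOp F N q t Γ (a + 1) (b - 1) f
        + (q + t ^ 2) • nuOp F N q t Γ (b - 1) (a + 1) f
        - (q * t * (1 + q)) • nuOp F N q t Γ (b - 2) (a + 2) f :=
  statement9_general F q t N Γ hΓ a b f

end
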